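/- Let D be an integral domain with quotient field K and let ⋆ be a semistar operation of D. Then (▲^⋆)_f = (▲^{⋆_f})_f, and this semistar operation of D[X] is the largest finite-type strict extension of ⋆_f: it is a strict extension of ⋆_f, it is of finite type, and every finite-type strict extension ★ of ⋆_f to D[X] satisfies ★ ≤ (▲^⋆)_f. -/

import Mathlib

/- Preliminaries: semistar operations on an integral domain `R` with quotient field `F`
(submodules of `F` over `R`), polynomial extension of semistar operations from `D`
to `D[X]` (viewed inside the quotient field `K(X) = RatFunc K` of `D[X]`). -/

open Polynomial Pointwise

set_option synthInstance.maxHeartbeats 1000000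
set_option maxHeartbeats 1000000

open scoped Classical

noncomputable section

section Generic

variable (R F : Type*) [CommRing R] [Field F] [Algebra R F]

/-- `o` is a semistar operation of `R` (on the nonzero `R`-submodules of the
quotient field `F`). -/
def IsSemistarOp (o : Submodule R F → Submodule R F) : Prop :=
  (∀ x : F, x ≠ 0 → ∀ E : Submodule R F, E ≠ ⊥ → o (x • E) = x • o E) ∧
  (∀ E G : Submodule R F, E ≠ ⊥ → G ≠ ⊥ → E ≤ G → o E ≤ o G) ∧
  (∀ E : Submodule R F, E ≠ ⊥ → E ≤ o E) ∧
  (∀ E : Submodule R F, E ≠ ⊥ → o (o E) = o E)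

/-- The finite-type operation `⋆_f` associated to `⋆`:
`E^{⋆_f} = ⋃ { G^⋆ : G nonzero finitely generated, G ⊆ E }`. -/
def finTypeFun (o : Submodule R F → Submodule R F) : Submodule R F → Submodule R F :=
  fun E => ⨆ (G : Submodule R F) (_ : G ≠ ⊥) (_ : G.FG) (_ : G ≤ E), o G

/-- `⋆` is of finite type, i.e. `⋆ = ⋆_f`. -/
def IsFiniteTypeFun (o : Submodule R F → Submodule R F) : Prop :=
  ∀ E : Submodule R F, E ≠ ⊥ → o E = finTypeFun R F o E

/-- `⋆` is stable: `(E ∩ G)^⋆ = E^⋆ ∩ G^⋆`. -/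
def IsStableFun (o : Submodule R F → Submodule R F) : Prop :=
  ∀ E G : Submodule R F, E ≠ ⊥ → G ≠ ⊥ → o (E ⊓ G) = o E ⊓ o G

/-- An ideal of `R` viewed as an `R`-submodule of `F`. -/
def idealSub (J : Ideal R) : Submodule R F := Submodule.map (Algebra.linearMap R F) J

/-- `(E : J) = { x ∈ F : xJ ⊆ E }` for an ideal `J` of `R`. -/
def colonIdeal (E : Submodule R F) (J : Ideal R) : Submodule R F where
  carrier := { x : F | ∀ a ∈ J, a • x ∈ E }
  add_mem' := fun {x y} hx hy a ha => by
    simpa [smul_add] using E.add_mem (hx a ha) (hy a ha)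
  zero_mem' := fun a _ => by simpa using E.zero_mem
  smul_mem' := fun r x hx a ha => by
    rw [← mul_smul, mul_comm, mul_smul]
    exact E.smul_mem r (hx a ha)

/-- The stable finite-type operation `tilde ⋆` associated to `⋆`:
`E^{tilde ⋆} = ⋃ { (E : J) : J nonzero finitely generated integral ideal with J^⋆ = R^⋆ }`. -/
def tildeFun (o : Submodule R F → Submodule R F) : Submodule R F → Submodule R F :=
  fun E => ⨆ (J : Ideal R) (_ : J ≠ ⊥) (_ : J.FG)
    (_ : o (idealSub R F J) = o (1 : Submodule R F)), colonIdeal R F E J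

/-- The `v`-operation: `E^v = (R : (R : E))` for `E` a nonzero fractional ideal,
and `E^v = F` otherwise. -/
def vFun : Submodule R F → Submodule R F := fun E =>
  if ∃ d : R, d ≠ 0 ∧ ∀ x ∈ E, d • x ∈ (1 : Submodule R F) then
    (1 : Submodule R F) / ((1 : Submodule R F) / E)
  else ⊤

/-- The `eab` operation `⋆_a` associated to `⋆`. -/
def aFun (o : Submodule R F → Submodule R F) : Submodule R F → Submodule R F := fun E =>
  ⨆ (G : Submodule R F) (_ : G ≠ ⊥) (_ : G.FG) (_ : G ≤ E),
    ⨆ (H : Submodule R F) (_ : H ≠ ⊥) (_ : H.FG), o (G * H) / o H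

/-- `I` is a quasi-`⋆`-ideal: a nonzero integral ideal with `I^⋆ ∩ R = I`. -/
def isQuasiIdealFun (o : Submodule R F → Submodule R F) (I : Ideal R) : Prop :=
  I ≠ ⊥ ∧ (o (idealSub R F I)).comap (Algebra.linearMap R F) = I

/-- `I` is a quasi-`⋆`-maximal ideal: maximal among proper quasi-`⋆`-ideals. -/
def isQuasiMaximalFun (o : Submodule R F → Submodule R F) (I : Ideal R) : Prop :=
  isQuasiIdealFun R F o I ∧ I ≠ ⊤ ∧
    ∀ J : Ideal R, isQuasiIdealFun R F o J → J ≠ ⊤ → I ≤ J → I = J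

/-- The `v`-operation relative to an overring `R'` (an `R`-submodule of `F`):
`B ↦ (R' : (R' : B))` for `B` a nonzero fractional ideal of `R'`, `F` otherwise. -/
def vRelFun (R' B : Submodule R F) : Submodule R F :=
  if ∃ z ∈ R', z ≠ 0 ∧ ∀ x ∈ B, z * x ∈ R' then R' / (R' / B) else ⊤

/-- The `t`-operation relative to an overring `R'`: finite-type operation associated to
the `v`-operation of `R'` (the union being over nonzero finitely generated
`R'`-submodules contained in `B`). -/
def tRelFun (R' B : Submodule R F) : Submodule R F :=
  ⨆ (G : Submodule R F) (_ : G ≠ ⊥)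
    (_ : ∃ S : Finset F, G = R' * Submodule.span R (S : Set F)) (_ : G ≤ B),
    vRelFun R F R' G

end Generic

section Poly

variable (D K : Type*) [CommRing D] [IsDomain D] [Field K] [Algebra D K] [IsFractionRing D K]

/-- The canonical ring homomorphism `D[X] → K(X)`. -/
def polyToRF : Polynomial D →+* RatFunc K :=
  (algebraMap (Polynomial K) (RatFunc K)).comp (Polynomial.mapRingHom (algebraMap D K))

/-- `K(X)` is an algebra over `D[X]`; in fact it is the quotient field of `D[X]`. -/
instance (priority := 100) : Algebra (Polynomial D) (RatFunc K) := (polyToRF D K).toAlgebra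

/-- For a `D`-submodule `E` of `K`, the `D[X]`-submodule `E[X]` of `K(X)`:
polynomials all of whose coefficients lie in `E`. -/
def polyExt (E : Submodule D K) : Submodule (Polynomial D) (RatFunc K) where
  carrier := { f : RatFunc K | ∃ p : Polynomial K, (∀ n, p.coeff n ∈ E) ∧
      f = algebraMap (Polynomial K) (RatFunc K) p }
  add_mem' := by
    rintro f g ⟨p, hp, rfl⟩ ⟨q, hq, rfl⟩
    exact ⟨p + q, fun n => by simpa using E.add_mem (hp n) (hq n), by simp⟩
  zero_mem' := ⟨0, fun n => by simpa using E.zero_mem, by simp⟩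
  smul_mem' := by
    rintro c f ⟨p, hp, rfl⟩
    refine ⟨Polynomial.map (algebraMap D K) c * p, fun n => ?_, ?_⟩
    · rw [Polynomial.coeff_mul]
      refine Submodule.sum_mem E fun ij _ => ?_
      rw [Polynomial.coeff_map, ← Algebra.smul_def]
      exact E.smul_mem _ (hp ij.2)
    · rw [Algebra.smul_def, RingHom.algebraMap_toAlgebra, map_mul]
      unfold polyToRF
      simp

/-- The contraction `B ∩ K` of a `D[X]`-submodule `B` of `K(X)` to a `D`-submodule of `K`. -/
def contractToBase (B : Submodule (Polynomial D) (RatFunc K)) : Submodule D K where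
  carrier := { x : K | algebraMap K (RatFunc K) x ∈ B }
  add_mem' := fun {x y} hx hy => by
    simpa [Set.mem_setOf_eq, map_add] using B.add_mem hx hy
  zero_mem' := by simpa using B.zero_mem
  smul_mem' := fun d x hx => by
    have h : algebraMap K (RatFunc K) (d • x)
        = (Polynomial.C d : Polynomial D) • (algebraMap K (RatFunc K) x) := by
      rw [Algebra.smul_def d x, map_mul, Algebra.smul_def, RingHom.algebraMap_toAlgebra]
      unfold polyToRF
      simp only [RingHom.coe_comp, Function.comp_apply, Polynomial.coe_mapRingHom,
        Polynomial.map_C, RatFunc.algebraMap_C, RatFunc.algebraMap_eq_C]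
    show algebraMap K (RatFunc K) (d • x) ∈ B
    rw [h]
    exact B.smul_mem (Polynomial.C d) hx

/-- The content `c_D(S)`: the `D`-submodule of `K` generated by the coefficients of all
polynomials belonging to `S`. -/
def contentOf (S : Set (RatFunc K)) : Submodule D K :=
  Submodule.span D { x : K | ∃ p : Polynomial K,
    algebraMap (Polynomial K) (RatFunc K) p ∈ S ∧ ∃ n, p.coeff n = x }

/-- The semistar operation `▲^⋆_T` of `D[X]` associated to a semistar operation `⋆` of `D`
and an overring `T` of `D`:
`A ↦ ⋂ { z⁻¹ (c_D(zA))^⋆[X] : z ∈ (T[X] : A), z ≠ 0 }` if `(T[X] : A) ≠ 0`, else `A ↦ K(X)`. -/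
def bigTriT (o : Submodule D K → Submodule D K) (T : Subalgebra D K) :
    Submodule (Polynomial D) (RatFunc K) → Submodule (Polynomial D) (RatFunc K) := fun A =>
  if ∃ z : RatFunc K, z ≠ 0 ∧ ∀ a ∈ A, z * a ∈ polyExt D K (Subalgebra.toSubmodule T) then
    ⨅ (z : RatFunc K) (_ : z ≠ 0) (_ : ∀ a ∈ A, z * a ∈ polyExt D K (Subalgebra.toSubmodule T)),
      z⁻¹ • polyExt D K (o (contentOf D K (z • (A : Set (RatFunc K)))))
  else ⊤

/-- `▲^⋆ := ▲^⋆_K`, the largest strict extension of `⋆` to `D[X]`. -/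
def bigTri (o : Submodule D K → Submodule D K) :
    Submodule (Polynomial D) (RatFunc K) → Submodule (Polynomial D) (RatFunc K) :=
  bigTriT D K o ⊤

/-- `b` is an extension of `⋆` to `D[X]` : `E^⋆ = (E[X])^b ∩ K`. -/
def IsExtensionFun (o : Submodule D K → Submodule D K)
    (b : Submodule (Polynomial D) (RatFunc K) → Submodule (Polynomial D) (RatFunc K)) : Prop :=
  ∀ E : Submodule D K, E ≠ ⊥ → o E = contractToBase D K (b (polyExt D K E))

/-- `b` is a strict extension of `⋆` to `D[X]` : `(E[X])^b = E^⋆[X]`. -/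
def IsStrictExtensionFun (o : Submodule D K → Submodule D K)
    (b : Submodule (Polynomial D) (RatFunc K) → Submodule (Polynomial D) (RatFunc K)) : Prop :=
  ∀ E : Submodule D K, E ≠ ⊥ → b (polyExt D K E) = polyExt D K (o E)

/-- `⋏^⋆ : A ↦ ⋂ { A^★ : ★ a semistar operation of D[X] extending ⋆ }`. -/
def curlyFun (o : Submodule D K → Submodule D K) :
    Submodule (Polynomial D) (RatFunc K) → Submodule (Polynomial D) (RatFunc K) := fun A =>
  ⨅ (b : Submodule (Polynomial D) (RatFunc K) → Submodule (Polynomial D) (RatFunc K))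
    (_ : IsSemistarOp (Polynomial D) (RatFunc K) b) (_ : IsExtensionFun D K o b), b A

/-- The localization `D_Q` of `D` at a prime ideal `Q`, as a `D`-submodule of `K`. -/
def locSub (Q : Ideal D) : Submodule D K :=
  Submodule.span D { x : K | ∃ s : D, s ∉ Q ∧ s • x ∈ (1 : Submodule D K) }

/-- The content of an ideal `I` of `D[X]`: the `D`-submodule of `K` generated by the
coefficients of the polynomials in `I`. -/
def contentOfIdeal (I : Ideal (Polynomial D)) : Submodule D K :=
  Submodule.span D { x : K | ∃ p ∈ I, ∃ n, algebraMap D K (Polynomial.coeff p n) = x }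

/-- The Nagata ring `D_Q(X)`, as a subset of `K(X)`: fractions `f/g` with
`f, g ∈ D_Q[X]` and the coefficients of `g` generating the unit ideal of `D_Q`. -/
def nagataSet (Q : Ideal D) : Set (RatFunc K) :=
  { u : RatFunc K | ∃ g : Polynomial K, (∀ n, g.coeff n ∈ locSub D K Q) ∧
      locSub D K Q * Submodule.span D { x : K | ∃ n, g.coeff n = x } = locSub D K Q ∧
      u * algebraMap (Polynomial K) (RatFunc K) g ∈ polyExt D K (locSub D K Q) }

end Poly

/-! The operation `▲^⋆` only sees `⋆` through the contents `c_D(zG)`, and for a finitely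
generated `G` with `zG ⊆ K[X]` these contents are finitely generated, where `⋆` and `⋆_f` agree;
so `▲^⋆` and `▲^{⋆_f}` coincide on finitely generated modules, which gives the equality of their
finite-type parts. Every semistar operation `★` strictly extending `⋆` lies below `▲^⋆`, because
`z A^★ = (zA)^★ ⊆ (c_D(zA)[X])^★ = c_D(zA)^⋆[X]`; applied to `⋆_f` this gives the maximality.
Finally `(F^⋆)[X] ⊆ (F[X])^{▲^⋆}`: a multiplier `z` of `F[X]` into `K[X]` is itself a polynomial
`w`, and `c_D(zF[X])` contains every `w_j F`. Covering a polynomial with coefficients in `E^{⋆_f}`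
by one finitely generated `F ⊆ E` then shows that `(▲^⋆)_f` is a strict extension of `⋆_f`. -/

section Semistar

variable {R F : Type*} [CommRing R] [Field F] [Algebra R F]

theorem Submodule.pointwise_smul_ne_bot {c : F} (hc : c ≠ 0) {E : Submodule R F} (hE : E ≠ ⊥) :
    c • E ≠ ⊥ := by
  obtain ⟨x, hx, hx0⟩ := (Submodule.ne_bot_iff E).mp hE
  exact (Submodule.ne_bot_iff _).mpr
    ⟨c • x, Submodule.smul_mem_pointwise_smul x c E hx, smul_ne_zero hc hx0⟩

namespace IsSemistarOp

variable {o : Submodule R F → Submodule R F}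

theorem smul_eq (ho : IsSemistarOp R F o) {x : F} (hx : x ≠ 0) {E : Submodule R F} (hE : E ≠ ⊥) :
    o (x • E) = x • o E :=
  ho.1 x hx E hE

theorem mono (ho : IsSemistarOp R F o) {E G : Submodule R F} (hE : E ≠ ⊥) (hG : G ≠ ⊥)
    (h : E ≤ G) : o E ≤ o G :=
  ho.2.1 E G hE hG h

theorem mul_mem_of_mul_le (ho : IsSemistarOp R F o) {E G : Submodule R F} (hE : E ≠ ⊥)
    (hG : G ≠ ⊥) {c : F} (hc : ∀ y ∈ E, c * y ∈ G) {x : F} (hx : x ∈ o E) : c * x ∈ o G := by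
  rcases eq_or_ne c 0 with rfl | hc0
  · simp
  have hcE : c • E ≤ G := by
    rintro _ ⟨y, hy, rfl⟩
    exact hc y hy
  exact ho.mono (Submodule.pointwise_smul_ne_bot hc0 hE) hG hcE
    (ho.smul_eq hc0 hE ▸ Submodule.smul_mem_pointwise_smul x c _ hx)

end IsSemistarOp

theorem le_finTypeFun (o : Submodule R F → Submodule R F) {G E : Submodule R F}
    (hG : G ≠ ⊥) (hGfg : G.FG) (hGE : G ≤ E) : o G ≤ finTypeFun R F o E :=
  le_iSup₂_of_le G hG <| le_iSup₂_of_le hGfg hGE le_rfl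

theorem finTypeFun_le_finTypeFun {o o' : Submodule R F → Submodule R F}
    (h : ∀ G, G ≠ ⊥ → G.FG → o G ≤ o' G) (E : Submodule R F) :
    finTypeFun R F o E ≤ finTypeFun R F o' E :=
  iSup₂_le fun G hG => iSup₂_le fun hGfg hGE =>
    (h G hG hGfg).trans (le_finTypeFun o' hG hGfg hGE)

theorem finTypeFun_congr {o o' : Submodule R F → Submodule R F}
    (h : ∀ G, G ≠ ⊥ → G.FG → o G = o' G) (E : Submodule R F) :
    finTypeFun R F o E = finTypeFun R F o' E :=
  le_antisymm (finTypeFun_le_finTypeFun (fun G hG hGfg => (h G hG hGfg).le) E)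
    (finTypeFun_le_finTypeFun (fun G hG hGfg => (h G hG hGfg).ge) E)

theorem finTypeFun_mono (o : Submodule R F → Submodule R F) {E E' : Submodule R F}
    (h : E ≤ E') : finTypeFun R F o E ≤ finTypeFun R F o E' :=
  iSup₂_le fun _ hG => iSup₂_le fun hGfg hGE => le_finTypeFun o hG hGfg (hGE.trans h)

theorem finTypeFun_finTypeFun (o : Submodule R F → Submodule R F) (E : Submodule R F) :
    finTypeFun R F (finTypeFun R F o) E = finTypeFun R F o E :=
  le_antisymm (iSup₂_le fun _ _ => iSup₂_le fun _ hGE => finTypeFun_mono o hGE)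
    (finTypeFun_le_finTypeFun (fun _ hG hGfg => le_finTypeFun o hG hGfg le_rfl) E)

theorem IsSemistarOp.finTypeFun_eq_of_fg {o : Submodule R F → Submodule R F}
    (ho : IsSemistarOp R F o) {E : Submodule R F} (hE : E ≠ ⊥) (hEfg : E.FG) :
    finTypeFun R F o E = o E :=
  le_antisymm (iSup₂_le fun _ hG => iSup₂_le fun _ hGE => ho.mono hG hE hGE)
    (le_finTypeFun o hE hEfg le_rfl)

theorem IsSemistarOp.exists_fg_subset_of_subset_finTypeFun {o : Submodule R F → Submodule R F}
    (ho : IsSemistarOp R F o) {E : Submodule R F} (hE : E ≠ ⊥) {s : Finset F}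
    (hs : (s : Set F) ⊆ finTypeFun R F o E) :
    ∃ G, G ≠ ⊥ ∧ G.FG ∧ G ≤ E ∧ (s : Set F) ⊆ o G := by
  let ι := {G : Submodule R F // G ≠ ⊥ ∧ G.FG ∧ G ≤ E}
  obtain ⟨x, hxE, hx⟩ := (Submodule.ne_bot_iff E).mp hE
  have : Nonempty ι := ⟨⟨R ∙ x, by simpa using hx, Submodule.fg_span_singleton x,
    (Submodule.span_singleton_le_iff_mem x E).mpr hxE⟩⟩
  have hdir : Directed (· ≤ ·) fun G : ι => o G := by
    rintro ⟨G, hG, hGfg, hGE⟩ ⟨G', hG', hG'fg, hG'E⟩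
    have hsup : G ⊔ G' ≠ ⊥ := fun h => hG (eq_bot_iff.mpr (h ▸ le_sup_left))
    exact ⟨⟨G ⊔ G', hsup, hGfg.sup hG'fg, sup_le hGE hG'E⟩,
      ho.mono hG hsup le_sup_left, ho.mono hG' hsup le_sup_right⟩
  have hfin : finTypeFun R F o E = ⨆ G : ι, o G :=
    le_antisymm
      (iSup₂_le fun G hG => iSup₂_le fun hGfg hGE => le_iSup_of_le ⟨G, hG, hGfg, hGE⟩ le_rfl)
      (iSup_le fun G => le_finTypeFun o G.2.1 G.2.2.1 G.2.2.2)
  rw [hfin, Submodule.coe_iSup_of_directed _ hdir] at hs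
  obtain ⟨⟨G, hG, hGfg, hGE⟩, hsG⟩ := hdir.exists_mem_subset_of_finset_subset_biUnion hs
  exact ⟨G, hG, hGfg, hGE, hsG⟩

end Semistar

section PolynomialExtension

variable {D K : Type*} [CommRing D] [Field K] [Algebra D K]

-- `K[X]` as a `D[X]`-submodule of `K(X)`: the module `T[X]` of `bigTriT` for `T = K`
local notation "K[X]ₜ" => polyExt D K (Subalgebra.toSubmodule (⊤ : Subalgebra D K))

theorem mem_polyExt_top_iff {f : RatFunc K} :
    f ∈ K[X]ₜ ↔ ∃ p : K[X], f = algebraMap K[X] (RatFunc K) p :=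
  ⟨fun ⟨p, _, hp⟩ => ⟨p, hp⟩, fun ⟨p, hp⟩ => ⟨p, fun _ => trivial, hp⟩⟩

theorem coeff_mem_of_coeffs_subset {E : Submodule D K} {p : K[X]} (h : (p.coeffs : Set K) ⊆ E)
    (n : ℕ) : p.coeff n ∈ E := by
  rcases eq_or_ne (p.coeff n) 0 with h0 | h0
  · rw [h0]; exact E.zero_mem
  · exact h (coeff_mem_coeffs h0)

theorem polyExt_mono {E E' : Submodule D K} (h : E ≤ E') : polyExt D K E ≤ polyExt D K E' :=
  fun _ ⟨p, hp, hf⟩ => ⟨p, fun n => h (hp n), hf⟩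

theorem algebraMap_mem_polyExt {E : Submodule D K} {x : K} (hx : x ∈ E) :
    algebraMap K (RatFunc K) x ∈ polyExt D K E := by
  refine ⟨C x, fun n => ?_, by rw [RatFunc.algebraMap_C, RatFunc.algebraMap_eq_C]⟩
  rw [coeff_C]
  split_ifs
  exacts [hx, E.zero_mem]

theorem polyExt_ne_bot {E : Submodule D K} (hE : E ≠ ⊥) : polyExt D K E ≠ ⊥ := by
  obtain ⟨x, hx, hx0⟩ := (Submodule.ne_bot_iff E).mp hE
  exact (Submodule.ne_bot_iff _).mpr ⟨_, algebraMap_mem_polyExt hx, by simpa using hx0⟩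

theorem ne_bot_of_le_contractToBase {F : Submodule D K} {G : Submodule D[X] (RatFunc K)}
    (hF : F ≠ ⊥) (hFG : F ≤ contractToBase D K G) : G ≠ ⊥ := by
  obtain ⟨x, hx, hx0⟩ := (Submodule.ne_bot_iff F).mp hF
  exact (Submodule.ne_bot_iff G).mpr ⟨_, hFG hx, by simpa using hx0⟩

theorem exists_fg_le_polyExt {F : Submodule D K} (hF : F.FG) :
    ∃ G : Submodule D[X] (RatFunc K), G.FG ∧ G ≤ polyExt D K F ∧ F ≤ contractToBase D K G := by
  obtain ⟨t, rfl⟩ := hF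
  refine ⟨Submodule.span D[X] (algebraMap K (RatFunc K) '' t),
    Submodule.fg_span (t.finite_toSet.image _), Submodule.span_le.mpr ?_,
    Submodule.span_le.mpr fun x hx => Submodule.subset_span ⟨x, hx, rfl⟩⟩
  rintro _ ⟨x, hx, rfl⟩
  exact algebraMap_mem_polyExt (Submodule.subset_span hx)

theorem IsSemistarOp.exists_fg_of_mem_polyExt_finTypeFun {o : Submodule D K → Submodule D K}
    (ho : IsSemistarOp D K o) {E : Submodule D K} (hE : E ≠ ⊥) {f : RatFunc K}
    (hf : f ∈ polyExt D K (finTypeFun D K o E)) :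
    ∃ F, F ≠ ⊥ ∧ F.FG ∧ F ≤ E ∧ f ∈ polyExt D K (o F) := by
  obtain ⟨p, hp, rfl⟩ := hf
  have hcoeffs : (p.coeffs : Set K) ⊆ finTypeFun D K o E := fun _ hx => by
    obtain ⟨n, -, rfl⟩ := mem_coeffs_iff.mp hx
    exact hp n
  obtain ⟨F, hF, hFfg, hFE, hpF⟩ := ho.exists_fg_subset_of_subset_finTypeFun hE hcoeffs
  exact ⟨F, hF, hFfg, hFE, p, coeff_mem_of_coeffs_subset hpF, rfl⟩

theorem coeff_mem_contentOf {S : Set (RatFunc K)} {p : K[X]}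
    (hp : algebraMap K[X] (RatFunc K) p ∈ S) (n : ℕ) : p.coeff n ∈ contentOf D K S :=
  Submodule.subset_span ⟨p, hp, n, rfl⟩

theorem coeff_mem_contentOf_smul {S : Set (RatFunc K)} {z a : RatFunc K} (ha : a ∈ S) {p : K[X]}
    (hp : z * a = algebraMap K[X] (RatFunc K) p) (n : ℕ) : p.coeff n ∈ contentOf D K (z • S) :=
  coeff_mem_contentOf (hp ▸ Set.smul_mem_smul_set ha) n

theorem contentOf_le {S : Set (RatFunc K)} {E : Submodule D K}
    (h : S ⊆ polyExt D K E) : contentOf D K S ≤ E := by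
  refine Submodule.span_le.mpr ?_
  rintro _ ⟨p, hp, n, rfl⟩
  obtain ⟨q, hq, hpq⟩ := h hp
  rw [IsFractionRing.injective K[X] (RatFunc K) hpq]
  exact hq n

theorem contentOf_smul_ne_bot {G : Submodule D[X] (RatFunc K)} {z : RatFunc K}
    (hG : G ≠ ⊥) (hz : z ≠ 0) (hzG : ∀ a ∈ G, z * a ∈ K[X]ₜ) :
    contentOf D K (z • (G : Set (RatFunc K))) ≠ ⊥ := by
  obtain ⟨a, ha, ha0⟩ := (Submodule.ne_bot_iff G).mp hG
  obtain ⟨p, hp⟩ := mem_polyExt_top_iff.mp (hzG a ha)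
  have hp0 : p ≠ 0 := by
    rintro rfl
    exact mul_ne_zero hz ha0 (by simpa using hp)
  obtain ⟨n, hn⟩ := Polynomial.ext_iff.not.mp hp0 |> not_forall.mp
  exact (Submodule.ne_bot_iff _).mpr ⟨p.coeff n, coeff_mem_contentOf_smul ha hp n, hn⟩

theorem contentOf_smul_fg {G : Submodule D[X] (RatFunc K)} {z : RatFunc K} (hG : G.FG)
    (hzG : ∀ a ∈ G, z * a ∈ K[X]ₜ) : (contentOf D K (z • (G : Set (RatFunc K)))).FG := by
  obtain ⟨s, rfl⟩ := hG
  have hq : ∀ a ∈ s, ∃ q : K[X], z * a = algebraMap K[X] (RatFunc K) q :=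
    fun a ha => mem_polyExt_top_iff.mp (hzG a (Submodule.subset_span ha))
  choose! q hq using hq
  set T := s.biUnion fun a => (q a).coeffs
  have hqT : ∀ a ∈ s, ∀ n, (q a).coeff n ∈ Submodule.span D (T : Set K) := fun a ha =>
    coeff_mem_of_coeffs_subset fun _ hx =>
      Submodule.subset_span (Finset.mem_biUnion.mpr ⟨a, ha, hx⟩)
  refine ⟨T, le_antisymm ?_ ?_⟩
  · rw [Submodule.span_le]
    intro x hx
    obtain ⟨a, ha, hx⟩ := Finset.mem_biUnion.mp hx
    obtain ⟨n, -, rfl⟩ := mem_coeffs_iff.mp hx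
    exact coeff_mem_contentOf_smul (Submodule.subset_span ha) (hq a ha) n
  · have hspan : Submodule.span D[X] (s : Set (RatFunc K)) ≤
        (polyExt D K (Submodule.span D (T : Set K))).comap (LinearMap.mulLeft D[X] z) :=
      Submodule.span_le.mpr fun a ha => ⟨q a, hqT a ha, hq a ha⟩
    apply contentOf_le
    rintro _ ⟨a, ha, rfl⟩
    exact hspan ha

theorem mem_bigTri_iff {o : Submodule D K → Submodule D K} {A : Submodule D[X] (RatFunc K)}
    {f : RatFunc K} :
    f ∈ bigTri D K o A ↔ ∀ z : RatFunc K, z ≠ 0 → (∀ a ∈ A, z * a ∈ K[X]ₜ) →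
      z * f ∈ polyExt D K (o (contentOf D K (z • (A : Set (RatFunc K))))) := by
  rw [bigTri, bigTriT]
  split_ifs with h
  · simp only [Submodule.mem_iInf]
    refine forall₃_congr fun z hz _ => ?_
    rw [← SetLike.mem_coe, Submodule.coe_pointwise_smul, Set.mem_inv_smul_set_iff₀ hz]
    rfl
  · exact iff_of_true Submodule.mem_top fun z hz hzA => (h ⟨z, hz, hzA⟩).elim

theorem IsSemistarOp.bigTri_finTypeFun_of_fg {o : Submodule D K → Submodule D K}
    (ho : IsSemistarOp D K o) {G : Submodule D[X] (RatFunc K)} (hG : G ≠ ⊥) (hGfg : G.FG) :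
    bigTri D K (finTypeFun D K o) G = bigTri D K o G := by
  ext f
  simp only [mem_bigTri_iff]
  refine forall₃_congr fun z hz hzG => ?_
  rw [ho.finTypeFun_eq_of_fg (contentOf_smul_ne_bot hG hz hzG) (contentOf_smul_fg hGfg hzG)]

theorem bigTri_le_polyExt_contentOf (o : Submodule D K → Submodule D K)
    {A : Submodule D[X] (RatFunc K)} (hA : A ≤ K[X]ₜ) :
    bigTri D K o A ≤ polyExt D K (o (contentOf D K A)) := fun f hf => by
  simpa using mem_bigTri_iff.mp hf 1 one_ne_zero fun a ha => by simpa using hA ha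

theorem IsSemistarOp.polyExt_le_bigTri {o : Submodule D K → Submodule D K}
    (ho : IsSemistarOp D K o) {F : Submodule D K} {G : Submodule D[X] (RatFunc K)} (hF : F ≠ ⊥)
    (hFG : F ≤ contractToBase D K G) : polyExt D K (o F) ≤ bigTri D K o G := by
  rintro _ ⟨p, hp, rfl⟩
  rw [mem_bigTri_iff]
  intro z hz hzG
  have hC := contentOf_smul_ne_bot (ne_bot_of_le_contractToBase hF hFG) hz hzG
  obtain ⟨x, hxF, hx0⟩ := (Submodule.ne_bot_iff F).mp hF
  -- `z` is a polynomial `w`, since `z x` is one and `x` is a nonzero constant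
  obtain ⟨w, rfl⟩ : ∃ w : K[X], z = algebraMap K[X] (RatFunc K) w := by
    obtain ⟨q, hq⟩ := mem_polyExt_top_iff.mp (hzG _ (hFG hxF))
    refine ⟨C x⁻¹ * q, ?_⟩
    rw [map_mul, ← hq, RatFunc.algebraMap_C, ← RatFunc.algebraMap_eq_C, map_inv₀, mul_left_comm,
      inv_mul_cancel₀ (by simpa using hx0), mul_one]
  have hwF : ∀ j, ∀ y ∈ F, w.coeff j * y ∈ contentOf D K (algebraMap K[X] (RatFunc K) w • G) :=
    fun j y hy => by
      simpa using coeff_mem_contentOf_smul (hFG hy) (p := w * C y)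
        (by rw [map_mul, RatFunc.algebraMap_C, ← RatFunc.algebraMap_eq_C]) j
  refine ⟨w * p, fun n => ?_, (map_mul _ _ _).symm⟩
  rw [coeff_mul]
  exact Submodule.sum_mem _ fun jk _ => ho.mul_mem_of_mul_le hF hC (hwF jk.1) (hp jk.2)

theorem IsSemistarOp.le_bigTri {o : Submodule D K → Submodule D K}
    {b : Submodule D[X] (RatFunc K) → Submodule D[X] (RatFunc K)}
    (hb : IsSemistarOp D[X] (RatFunc K) b) (hbo : IsStrictExtensionFun D K o b)
    {G : Submodule D[X] (RatFunc K)} (hG : G ≠ ⊥) : b G ≤ bigTri D K o G := by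
  intro f hf
  rw [mem_bigTri_iff]
  intro z hz hzG
  have hC := contentOf_smul_ne_bot hG hz hzG
  have hzG' : z • G ≤ polyExt D K (contentOf D K (z • (G : Set (RatFunc K)))) := by
    rintro _ ⟨a, ha, rfl⟩
    obtain ⟨p, hp⟩ := mem_polyExt_top_iff.mp (hzG a ha)
    exact ⟨p, coeff_mem_contentOf_smul ha hp, hp⟩
  rw [← hbo _ hC]
  exact hb.mono (Submodule.pointwise_smul_ne_bot hz hG) (polyExt_ne_bot hC) hzG'
    (hb.smul_eq hz hG ▸ Submodule.smul_mem_pointwise_smul f z _ hf)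

theorem IsSemistarOp.finTypeFun_bigTri_polyExt {o : Submodule D K → Submodule D K}
    (ho : IsSemistarOp D K o) {E : Submodule D K} (hE : E ≠ ⊥) :
    finTypeFun D[X] (RatFunc K) (bigTri D K o) (polyExt D K E) =
      polyExt D K (finTypeFun D K o E) := by
  apply le_antisymm
  · refine iSup₂_le fun G hG => iSup₂_le fun hGfg hGE => ?_
    have hGtop : G ≤ K[X]ₜ := hGE.trans (polyExt_mono fun _ _ => trivial)
    have hGpoly : ∀ a ∈ G, 1 * a ∈ K[X]ₜ := fun a ha => by simpa using hGtop ha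
    have hc : contentOf D K G ≠ ⊥ := by simpa using contentOf_smul_ne_bot hG one_ne_zero hGpoly
    have hcfg : (contentOf D K G).FG := by simpa using contentOf_smul_fg hGfg hGpoly
    exact (bigTri_le_polyExt_contentOf o hGtop).trans
      (polyExt_mono (le_finTypeFun o hc hcfg (contentOf_le hGE)))
  · intro f hf
    obtain ⟨F, hF, hFfg, hFE, hfF⟩ := ho.exists_fg_of_mem_polyExt_finTypeFun hE hf
    obtain ⟨G, hGfg, hGF, hFG⟩ := exists_fg_le_polyExt hFfg
    exact le_finTypeFun _ (ne_bot_of_le_contractToBase hF hFG) hGfg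
      (hGF.trans (polyExt_mono hFE)) (ho.polyExt_le_bigTri hF hFG hfF)

end PolynomialExtension

theorem finType_bigTri_general (D K : Type*) [CommRing D] [Field K] [Algebra D K]
    (star : Submodule D K → Submodule D K) (hstar : IsSemistarOp D K star) :
    (∀ A : Submodule (Polynomial D) (RatFunc K), A ≠ ⊥ →
      finTypeFun (Polynomial D) (RatFunc K) (bigTri D K star) A =
        finTypeFun (Polynomial D) (RatFunc K) (bigTri D K (finTypeFun D K star)) A) ∧
    IsStrictExtensionFun D K (finTypeFun D K star)
      (finTypeFun (Polynomial D) (RatFunc K) (bigTri D K star)) ∧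
    IsFiniteTypeFun (Polynomial D) (RatFunc K)
      (finTypeFun (Polynomial D) (RatFunc K) (bigTri D K star)) ∧
    ∀ b : Submodule (Polynomial D) (RatFunc K) → Submodule (Polynomial D) (RatFunc K),
      IsSemistarOp (Polynomial D) (RatFunc K) b →
      IsFiniteTypeFun (Polynomial D) (RatFunc K) b →
      IsStrictExtensionFun D K (finTypeFun D K star) b →
      ∀ A : Submodule (Polynomial D) (RatFunc K), A ≠ ⊥ →
        b A ≤ finTypeFun (Polynomial D) (RatFunc K) (bigTri D K star) A := by
  refine ⟨fun A _ =>
      finTypeFun_congr (fun G hG hGfg => (hstar.bigTri_finTypeFun_of_fg hG hGfg).symm) A,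
    fun E hE => hstar.finTypeFun_bigTri_polyExt hE,
    fun A _ => (finTypeFun_finTypeFun _ A).symm,
    fun b hb hbft hbext A hA => ?_⟩
  rw [hbft A hA]
  exact finTypeFun_le_finTypeFun (fun G hG hGfg =>
    (hb.le_bigTri hbext hG).trans_eq (hstar.bigTri_finTypeFun_of_fg hG hGfg)) A

theorem finType_bigTri (D K : Type*) [CommRing D] [IsDomain D] [Field K] [Algebra D K] [IsFractionRing D K]
    (star : Submodule D K → Submodule D K) (hstar : IsSemistarOp D K star) :
    (∀ A : Submodule (Polynomial D) (RatFunc K), A ≠ ⊥ →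
      finTypeFun (Polynomial D) (RatFunc K) (bigTri D K star) A =
        finTypeFun (Polynomial D) (RatFunc K) (bigTri D K (finTypeFun D K star)) A) ∧
    IsStrictExtensionFun D K (finTypeFun D K star)
      (finTypeFun (Polynomial D) (RatFunc K) (bigTri D K star)) ∧
    IsFiniteTypeFun (Polynomial D) (RatFunc K)
      (finTypeFun (Polynomial D) (RatFunc K) (bigTri D K star)) ∧
    ∀ b : Submodule (Polynomial D) (RatFunc K) → Submodule (Polynomial D) (RatFunc K),
      IsSemistarOp (Polynomial D) (RatFunc K) b →
      IsFiniteTypeFun (Polynomial D) (RatFunc K) b →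
      IsStrictExtensionFun D K (finTypeFun D K star) b →
      ∀ A : Submodule (Polynomial D) (RatFunc K), A ≠ ⊥ →
        b A ≤ finTypeFun (Polynomial D) (RatFunc K) (bigTri D K star) A :=
  finType_bigTri_general D K star hstar
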